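/- arXiv:2001.09323 — 2 statements merged into one kernel-verified Lean document; each statement's English description precedes it below -/
import Mathlib

section
/- Let α, β ∈ ℂ and let ℓ, n, m, r be natural numbers. Then the following identity holds in ℂ[X]: Σ_{k=0}^{n+r} (m−2β)^{n+r−k} C(n+r,k) C(ℓ+k+r,r) B_{ℓ+k}^{(α)}(X+β) − Σ_{k=0}^{ℓ+r} (−1)^{r+ℓ+k} (m−2β)^{ℓ+r−k} C(ℓ+r,k) C(n+k+r,r) B_{n+k}^{(α)}(X−β+m−1) = Ω_{α−1}( (1/r!) · (d/dX)^{r+1} [ (X+β−1)^{ℓ+r} (X−β+m−1)^{n+r} ] ), where B_j^{(α)}(X+c) denotes the polynomial B_j^{(α)} composed with the polynomial X+c. -/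
open scoped BigOperators
open Polynomial Finset

noncomputable section

/-- The formal power series `(e^t - 1)/t` over `ℂ` (constant term `1`). -/
def expSub1DivT : PowerSeries ℂ := PowerSeries.mk fun n => ((n + 1).factorial : ℂ)⁻¹

/-- The formal power series `t/(e^t - 1)` over `ℂ`. -/
def bernoulliBase : PowerSeries ℂ := expSub1DivT⁻¹

/-- The formal logarithm of a power series with constant term `1`:
`log F = ∑_{k ≥ 1} (-1)^(k+1) (F-1)^k / k`, computed coefficientwise
(only the terms with `k ≤ n` contribute to the `n`-th coefficient). -/
def formalLog (F : PowerSeries ℂ) : PowerSeries ℂ :=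
  PowerSeries.mk fun n =>
    ∑ k ∈ Finset.range (n + 1),
      (-1 : ℂ) ^ (k + 1) * (k : ℂ)⁻¹ * PowerSeries.coeff n ((F - 1) ^ k)

/-- The formal exponential of a power series with zero constant term:
`exp H = ∑_{k ≥ 0} H^k / k!`, computed coefficientwise. -/
def formalExp (H : PowerSeries ℂ) : PowerSeries ℂ :=
  PowerSeries.mk fun n =>
    ∑ k ∈ Finset.range (n + 1), ((k.factorial : ℂ))⁻¹ * PowerSeries.coeff n (H ^ k)

/-- `(t/(e^t - 1))^α := exp (α • log (t/(e^t - 1)))`. -/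
def bernoulliBasePow (α : ℂ) : PowerSeries ℂ := formalExp (α • formalLog bernoulliBase)

/-- The generalized Bernoulli numbers `B_n^{(α)}`, defined by
`∑ B_n^{(α)} t^n / n! = (t/(e^t-1))^α`. -/
def genBernoulliNumber (α : ℂ) (n : ℕ) : ℂ :=
  (n.factorial : ℂ) * PowerSeries.coeff n (bernoulliBasePow α)

/-- The generalized Bernoulli polynomials `B_n^{(α)}(x)`, defined by
`∑ B_n^{(α)}(x) t^n / n! = (t/(e^t-1))^α e^{t x}`; equivalently
`B_n^{(α)}(x) = ∑_{k ≤ n} C(n,k) B_k^{(α)} x^{n-k}`. -/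
def genBernoulliPoly (α : ℂ) (n : ℕ) : Polynomial ℂ :=
  ∑ k ∈ Finset.range (n + 1),
    Polynomial.C ((n.choose k : ℂ) * genBernoulliNumber α k) * Polynomial.X ^ (n - k)

/-- `Ω_γ`: the unique `ℂ`-linear endomorphism of `ℂ[X]` with `Ω_γ (X^n) = B_n^{(γ)}(X)`. -/
def OmegaOp (γ : ℂ) (P : Polynomial ℂ) : Polynomial ℂ :=
  P.sum fun n a => Polynomial.C a * genBernoulliPoly γ n

end

/-!
`Ω_γ` is the operator `F_γ(D)`, where `F_γ = (t/(e^t-1))^γ` and `D = d/dX`. Since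
`F_{α-1} · t = F_α · (e^t - 1)` and `e^D` is the shift `P ↦ P(X+1)`, we get
`Ω_{α-1}(P') = Ω_α(P(X+1)) - Ω_α(P)`. Take `P = (1/r!) D^r[(X+β-1)^(ℓ+r) (X-β+m-1)^(n+r)]`:
expanding `P(X+1)` in powers of `X+β` and `P` in powers of `X-β+m-1` (binomial theorem), and using
that `Ω_γ` commutes with shifts, so `Ω_γ((X+c)^j) = B_j^{(γ)}(X+c)`, gives the two sums.
The power series identity comes from `exp ∘ log = id` and `exp (A + B) = exp A · exp B`, both
proved by uniqueness of solutions of `E' = G E` with given constant term.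
-/

open scoped PowerSeries

namespace PowerSeries

section CharZero

variable {K : Type*} [Field K] [CharZero K]

theorem eq_zero_of_derivative_eq_mul {G f : K⟦X⟧} (h : d⁄dX K f = G * f)
    (h₀ : constantCoeff f = 0) : f = 0 := by
  ext n
  induction n using Nat.strong_induction_on with
  | _ n ih =>
    cases n with
    | zero => simpa using h₀
    | succ m =>
      have hm : coeff (m + 1) f * (m + 1) = 0 := by
        rw [← coeff_derivative, h, coeff_mul]
        refine sum_eq_zero fun p hp => ?_
        rw [ih p.2 (by have := mem_antidiagonal.1 hp; omega), map_zero, mul_zero]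
      simpa [Nat.cast_add_one_ne_zero] using hm

theorem eq_of_derivative_eq_mul {G E₁ E₂ : K⟦X⟧} (h₁ : d⁄dX K E₁ = G * E₁)
    (h₂ : d⁄dX K E₂ = G * E₂) (h₀ : constantCoeff E₁ = constantCoeff E₂) : E₁ = E₂ :=
  sub_eq_zero.1 <| eq_zero_of_derivative_eq_mul (G := G) (by rw [map_sub, h₁, h₂, mul_sub])
    (by rw [map_sub, h₀, sub_self])

theorem derivative_sum_range_exp (H : K⟦X⟧) (N : ℕ) :
    d⁄dX K (∑ k ∈ range (N + 1), (k.factorial : K)⁻¹ • H ^ k) =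
      (∑ k ∈ range N, (k.factorial : K)⁻¹ • H ^ k) * d⁄dX K H := by
  rw [map_sum, sum_range_succ', sum_mul]
  simp only [pow_zero, Derivation.map_smul, Derivation.map_one_eq_zero, smul_zero, add_zero,
    derivative_pow, Nat.add_sub_cancel]
  refine sum_congr rfl fun k _ => ?_
  rw [mul_assoc, ← nsmul_eq_mul, ← Nat.cast_smul_eq_nsmul K, smul_smul, smul_mul_assoc]
  congr 1
  rw [Nat.factorial_succ]
  push_cast
  field_simp

theorem derivative_sum_range_log (F : K⟦X⟧) (N : ℕ) :
    F * d⁄dX K (∑ k ∈ range (N + 1), ((-1) ^ (k + 1) * (k : K)⁻¹) • (F - 1) ^ k) =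
      (1 - (1 - F) ^ N) * d⁄dX K F := by
  have hterm : ∀ k, d⁄dX K (((-1) ^ (k + 1 + 1) * ((k + 1 : ℕ) : K)⁻¹) • (F - 1) ^ (k + 1)) =
      (1 - F) ^ k * d⁄dX K F := by
    intro k
    rw [Derivation.map_smul, derivative_pow, Nat.add_sub_cancel, map_sub,
      Derivation.map_one_eq_zero, sub_zero, mul_assoc, ← nsmul_eq_mul,
      ← Nat.cast_smul_eq_nsmul K, smul_smul,
      show 1 - F = (-1 : K) • (F - 1) by rw [neg_one_smul, neg_sub], _root_.smul_pow,
      smul_mul_assoc]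
    congr 1
    push_cast
    field_simp
    ring
  rw [map_sum, sum_range_succ', Nat.cast_zero, inv_zero, mul_zero, zero_smul, map_zero, add_zero]
  simp only [hterm]
  rw [← sum_mul, ← mul_assoc]
  congr 1
  nth_rewrite 1 [show F = 1 - (1 - F) by rw [sub_sub_cancel]]
  exact mul_neg_geom_sum _ _

end CharZero

theorem sum_range_mul_coeff_pow {R : Type*} [CommSemiring R] (c : ℕ → R) {H : R⟦X⟧}
    (hH : constantCoeff H = 0) {n N : ℕ} (hn : n < N) :
    ∑ k ∈ range (n + 1), c k * coeff n (H ^ k) = ∑ k ∈ range N, c k * coeff n (H ^ k) := by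
  refine sum_subset (range_subset_range.2 hn) fun k _ hk => ?_
  have hnk : n < k := by simp only [mem_range, not_lt] at hk; omega
  rw [X_pow_dvd_iff.1 (pow_dvd_pow_of_dvd (X_dvd_iff.2 hH) k) n hnk, mul_zero]

theorem trunc_formalExp {H : ℂ⟦X⟧} (hH : constantCoeff H = 0) (N : ℕ) :
    trunc N (formalExp H) = trunc N (∑ k ∈ range N, (k.factorial : ℂ)⁻¹ • H ^ k) := by
  ext i
  simp only [coeff_trunc]
  split_ifs with hi
  · simp only [formalExp, coeff_mk, map_sum, coeff_smul, smul_eq_mul]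
    exact sum_range_mul_coeff_pow _ hH hi
  · rfl

theorem trunc_formalLog {F : ℂ⟦X⟧} (hF : constantCoeff F = 1) (N : ℕ) :
    trunc N (formalLog F) =
      trunc N (∑ k ∈ range N, ((-1) ^ (k + 1) * (k : ℂ)⁻¹) • (F - 1) ^ k) := by
  ext i
  simp only [coeff_trunc]
  split_ifs with hi
  · simp only [formalLog, coeff_mk, map_sum, coeff_smul, smul_eq_mul]
    exact sum_range_mul_coeff_pow _ (by rw [map_sub, hF, map_one, sub_self]) hi
  · rfl

theorem derivative_formalExp {H : ℂ⟦X⟧} (hH : constantCoeff H = 0) :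
    d⁄dX ℂ (formalExp H) = formalExp H * d⁄dX ℂ H := by
  -- the `n`-th coefficient only sees truncations at `n + 2`, where `formalExp H` is a partial sum
  ext n
  rw [← coeff_coe_trunc_of_lt (Nat.lt_succ_self n), trunc_derivative, trunc_formalExp hH,
    ← trunc_derivative, coeff_coe_trunc_of_lt (Nat.lt_succ_self n), derivative_sum_range_exp,
    coeff_mul_eq_coeff_trunc_mul_trunc _ _ (Nat.lt_succ_self n), ← trunc_formalExp hH,
    ← coeff_mul_eq_coeff_trunc_mul_trunc _ _ (Nat.lt_succ_self n)]

theorem derivative_formalLog {F : ℂ⟦X⟧} (hF : constantCoeff F = 1) :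
    d⁄dX ℂ F = F * d⁄dX ℂ (formalLog F) := by
  ext n
  have hvanish : coeff n ((1 - F) ^ (n + 1) * d⁄dX ℂ F) = 0 :=
    X_pow_dvd_iff.1 (dvd_mul_of_dvd_left (pow_dvd_pow_of_dvd
      (X_dvd_iff.2 (by rw [map_sub, hF, map_one, sub_self])) _) _) n (Nat.lt_succ_self n)
  rw [coeff_mul_eq_coeff_trunc_mul_trunc _ _ (Nat.lt_succ_self n), trunc_derivative,
    trunc_formalLog hF, ← trunc_derivative,
    ← coeff_mul_eq_coeff_trunc_mul_trunc _ _ (Nat.lt_succ_self n),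
    derivative_sum_range_log, sub_mul, one_mul, map_sub, hvanish, sub_zero]

theorem formalExp_add {A B : ℂ⟦X⟧} (hA : constantCoeff A = 0) (hB : constantCoeff B = 0) :
    formalExp (A + B) = formalExp A * formalExp B := by
  refine eq_of_derivative_eq_mul (G := d⁄dX ℂ (A + B)) ?_ ?_ ?_
  · rw [derivative_formalExp (by rw [map_add, hA, hB, add_zero]), mul_comm]
  · rw [Derivation.leibniz, derivative_formalExp hA, derivative_formalExp hB, map_add, smul_eq_mul,
      smul_eq_mul]
    ring
  · simp [formalExp]

theorem formalExp_formalLog {F : ℂ⟦X⟧} (hF : constantCoeff F = 1) :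
    formalExp (formalLog F) = F := by
  refine eq_of_derivative_eq_mul (G := d⁄dX ℂ (formalLog F)) ?_ ?_ ?_
  · rw [derivative_formalExp (by simp [formalLog]), mul_comm]
  · rw [derivative_formalLog hF, mul_comm]
  · simp [formalExp, hF]

end PowerSeries

theorem constantCoeff_expSub1DivT : PowerSeries.constantCoeff expSub1DivT = 1 := by
  simp [expSub1DivT, ← PowerSeries.coeff_zero_eq_constantCoeff_apply]

theorem bernoulliBase_mul_expSub1DivT : bernoulliBase * expSub1DivT = 1 :=
  PowerSeries.inv_mul_cancel _ (by rw [constantCoeff_expSub1DivT]; exact one_ne_zero)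

theorem expSub1DivT_mul_X : expSub1DivT * PowerSeries.X = PowerSeries.exp ℂ - 1 := by
  ext (_ | n)
  · simp
  · simp [PowerSeries.coeff_succ_mul_X, expSub1DivT, PowerSeries.coeff_one]

theorem bernoulliBasePow_sub_one_mul (α : ℂ) :
    bernoulliBasePow (α - 1) * bernoulliBase = bernoulliBasePow α := by
  have hB : PowerSeries.constantCoeff bernoulliBase = 1 := by
    rw [bernoulliBase, PowerSeries.constantCoeff_inv, constantCoeff_expSub1DivT, inv_one]
  have hL (γ : ℂ) : PowerSeries.constantCoeff (γ • formalLog bernoulliBase) = 0 := by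
    simp [formalLog]
  calc bernoulliBasePow (α - 1) * bernoulliBase
      = formalExp ((α - 1) • formalLog bernoulliBase) * formalExp (formalLog bernoulliBase) := by
        rw [bernoulliBasePow, PowerSeries.formalExp_formalLog hB]
    _ = bernoulliBasePow α := by
        rw [← PowerSeries.formalExp_add (hL _) (by simpa using hL 1), bernoulliBasePow, sub_smul,
          one_smul, sub_add_cancel]

theorem bernoulliBasePow_sub_one_mul_X (α : ℂ) :
    bernoulliBasePow (α - 1) * PowerSeries.X = bernoulliBasePow α * (PowerSeries.exp ℂ - 1) := by
  rw [← expSub1DivT_mul_X, ← bernoulliBasePow_sub_one_mul α, mul_assoc, ← mul_assoc bernoulliBase,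
    bernoulliBase_mul_expSub1DivT, one_mul]

namespace Polynomial

variable {R : Type*} [CommRing R]

theorem iterate_derivative_taylor (k : ℕ) (a : R) (P : R[X]) :
    derivative^[k] (taylor a P) = taylor a (derivative^[k] P) :=
  Function.Commute.iterate_left (fun Q => by
    rw [taylor_apply, taylor_apply, derivative_comp, derivative_X_add_C, one_mul]) k P

theorem sum_range_smul_iterate_derivative_of_natDegree_lt (c : ℕ → R) {P : R[X]} {N : ℕ}
    (hN : P.natDegree < N) :
    ∑ j ∈ range (P.natDegree + 1), c j • derivative^[j] P =
      ∑ j ∈ range N, c j • derivative^[j] P :=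
  sum_subset (range_subset_range.2 hN) fun j _ hj => by
    rw [iterate_derivative_eq_zero (by simp only [mem_range, not_lt] at hj; omega), smul_zero]

theorem aeval_derivative_eq_zero_of_X_pow_dvd {p P : R[X]} {N : ℕ} (hp : X ^ N ∣ p)
    (hP : P.natDegree < N) : aeval (derivative : Module.End R R[X]) p P = 0 := by
  obtain ⟨q, rfl⟩ := hp
  rw [mul_comm, map_mul, Module.End.mul_apply, map_pow, aeval_X, Module.End.pow_apply,
    iterate_derivative_eq_zero hP, map_zero]

theorem aeval_derivative_trunc_coe (p : R[X]) {P : R[X]} {N : ℕ} (hP : P.natDegree < N) :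
    aeval (derivative : Module.End R R[X]) (PowerSeries.trunc N (p : R⟦X⟧)) P =
      aeval (derivative : Module.End R R[X]) p P := by
  rw [← sub_eq_zero, ← LinearMap.sub_apply, ← map_sub]
  refine aeval_derivative_eq_zero_of_X_pow_dvd (X_pow_dvd_iff.2 fun i hi => ?_) hP
  simp [PowerSeries.coeff_trunc, hi]

theorem iterate_derivative_X_add_C_pow_mul_X_add_C_pow (d e : R) (a b r : ℕ) :
    derivative^[r] ((X + C d) ^ (a + r) * (X + C e) ^ (b + r)) =
      r.factorial • ∑ k ∈ range (b + r + 1),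
        C ((e - d) ^ (b + r - k) * ((b + r).choose k : R) * ((a + k + r).choose r : R)) *
          (X + C d) ^ (a + k) := by
  have hexpand : (X + C e) ^ (b + r) =
      ∑ k ∈ range (b + r + 1),
        C ((e - d) ^ (b + r - k) * ((b + r).choose k : R)) * (X + C d) ^ k := by
    rw [show X + C e = (X + C d) + C (e - d) by rw [C_sub]; ring, add_pow]
    refine sum_congr rfl fun k _ => ?_
    rw [map_mul, map_pow, map_natCast]
    ring
  rw [hexpand, mul_sum, iterate_derivative_sum, smul_sum]
  refine sum_congr rfl fun k _ => ?_
  rw [mul_left_comm, ← pow_add, iterate_derivative_C_mul, iterate_derivative_X_add_pow,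
    show a + r + k - r = a + k by omega, show a + r + k = a + k + r by omega,
    Nat.descFactorial_eq_factorial_mul_choose]
  simp only [map_mul, map_natCast, nsmul_eq_mul, Nat.cast_mul]
  ring

end Polynomial

namespace PowerSeries

open Polynomial (taylor)

variable {R : Type*} [CommRing R]

/-- The operator `F(D)`, `D` the derivative; the terms with `j > natDegree P` would vanish. -/
noncomputable def evalDerivative (F : R⟦X⟧) : R[X] →ₗ[R] R[X] where
  toFun P := ∑ j ∈ range (P.natDegree + 1), coeff j F • Polynomial.derivative^[j] P
  map_add' P Q := by
    have hP : P.natDegree < max P.natDegree Q.natDegree + 1 := by omega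
    have hQ : Q.natDegree < max P.natDegree Q.natDegree + 1 := by omega
    have hPQ : (P + Q).natDegree < max P.natDegree Q.natDegree + 1 :=
      (Polynomial.natDegree_add_le P Q).trans_lt (Nat.lt_succ_self _)
    rw [Polynomial.sum_range_smul_iterate_derivative_of_natDegree_lt _ hP,
      Polynomial.sum_range_smul_iterate_derivative_of_natDegree_lt _ hQ,
      Polynomial.sum_range_smul_iterate_derivative_of_natDegree_lt _ hPQ, ← sum_add_distrib]
    simp only [iterate_map_add, smul_add]
  map_smul' c P := by
    have hcP : (c • P).natDegree < P.natDegree + 1 :=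
      (Polynomial.natDegree_smul_le c P).trans_lt (Nat.lt_succ_self _)
    rw [Polynomial.sum_range_smul_iterate_derivative_of_natDegree_lt _ hcP, RingHom.id_apply,
      smul_sum]
    simp only [Polynomial.iterate_derivative_smul, smul_comm c]

theorem evalDerivative_apply (F : R⟦X⟧) (P : R[X]) :
    evalDerivative F P =
      ∑ j ∈ range (P.natDegree + 1), coeff j F • Polynomial.derivative^[j] P :=
  rfl

theorem evalDerivative_apply_of_natDegree_lt (F : R⟦X⟧) {P : R[X]} {N : ℕ}
    (hN : P.natDegree < N) :
    evalDerivative F P = ∑ j ∈ range N, coeff j F • Polynomial.derivative^[j] P :=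
  Polynomial.sum_range_smul_iterate_derivative_of_natDegree_lt _ hN

theorem natDegree_evalDerivative_le (F : R⟦X⟧) (P : R[X]) :
    (evalDerivative F P).natDegree ≤ P.natDegree :=
  evalDerivative_apply F P ▸ Polynomial.natDegree_sum_le_of_forall_le _ _ fun j _ =>
    (Polynomial.natDegree_smul_le _ _).trans
      ((Polynomial.natDegree_iterate_derivative P j).trans (Nat.sub_le _ _))

theorem evalDerivative_eq_aeval_trunc (F : R⟦X⟧) {P : R[X]} {N : ℕ} (hN : P.natDegree < N) :
    evalDerivative F P =
      Polynomial.aeval (Polynomial.derivative : Module.End R R[X]) (trunc N F) P := by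
  obtain ⟨n, rfl⟩ : ∃ n, N = n + 1 := ⟨N - 1, by omega⟩
  rw [evalDerivative_apply_of_natDegree_lt F hN,
    Polynomial.aeval_eq_sum_range' (natDegree_trunc_lt F n), LinearMap.sum_apply]
  refine sum_congr rfl fun j hj => ?_
  rw [LinearMap.smul_apply, Module.End.pow_apply, coeff_trunc, if_pos (mem_range.1 hj)]

theorem evalDerivative_mul (F G : R⟦X⟧) :
    evalDerivative (F * G) = evalDerivative F * evalDerivative G := by
  refine LinearMap.ext fun P => ?_
  have hN := P.natDegree.lt_succ_self
  rw [Module.End.mul_apply,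
    evalDerivative_eq_aeval_trunc F ((natDegree_evalDerivative_le G P).trans_lt hN),
    evalDerivative_eq_aeval_trunc _ hN, evalDerivative_eq_aeval_trunc _ hN,
    ← trunc_trunc_mul_trunc, ← Polynomial.coe_mul, Polynomial.aeval_derivative_trunc_coe _ hN,
    map_mul, Module.End.mul_apply]

theorem evalDerivative_sub (F G : R⟦X⟧) :
    evalDerivative (F - G) = evalDerivative F - evalDerivative G := by
  refine LinearMap.ext fun P => ?_
  simp only [LinearMap.sub_apply, evalDerivative_apply, map_sub, sub_smul, sum_sub_distrib]

theorem evalDerivative_X : evalDerivative (X : R⟦X⟧) = Polynomial.derivative := by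
  refine LinearMap.ext fun P => ?_
  rw [evalDerivative_eq_aeval_trunc _ (P.natDegree.lt_succ_self.trans (Nat.lt_succ_self _)),
    trunc_X, Polynomial.aeval_X]

theorem evalDerivative_taylor (F : R⟦X⟧) (a : R) (P : R[X]) :
    evalDerivative F (taylor a P) = taylor a (evalDerivative F P) := by
  simp only [evalDerivative_apply, Polynomial.natDegree_taylor,
    Polynomial.iterate_derivative_taylor, map_sum, map_smul]

theorem evalDerivative_exp [Algebra ℚ R] : evalDerivative (exp R) = taylor 1 := by
  refine Polynomial.lhom_ext' fun n => LinearMap.ext fun a => ?_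
  have hn : (Polynomial.monomial n a).natDegree < n + 1 :=
    (Polynomial.natDegree_monomial_le a).trans_lt n.lt_succ_self
  rw [LinearMap.comp_apply, LinearMap.comp_apply, evalDerivative_apply_of_natDegree_lt _ hn,
    Polynomial.taylor_monomial, add_comm Polynomial.X, add_pow, mul_sum]
  refine sum_congr rfl fun j _ => ?_
  have hinv : algebraMap ℚ R (1 / j.factorial) * (j.factorial : R) = 1 := by
    rw [← map_natCast (algebraMap ℚ R), ← map_mul, one_div_mul_cancel (by positivity), map_one]
  rw [← Polynomial.factorial_smul_hasseDeriv, LinearMap.smul_apply, Polynomial.hasseDeriv_monomial,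
    coeff_exp, ← Nat.cast_smul_eq_nsmul R, smul_smul, hinv, one_smul,
    ← Polynomial.C_mul_X_pow_eq_monomial, map_one, one_pow, one_mul, ← Polynomial.C_eq_natCast,
    map_mul]
  ring

end PowerSeries

theorem OmegaOp_eq_evalDerivative (γ : ℂ) (P : ℂ[X]) :
    OmegaOp γ P = (bernoulliBasePow γ).evalDerivative P := by
  induction P using Polynomial.induction_on' with
  | add p q hp hq =>
    rw [map_add, ← hp, ← hq, OmegaOp, OmegaOp, OmegaOp,
      Polynomial.sum_add_index p q _ (fun _ => by simp) fun _ _ _ => by rw [map_add, add_mul]]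
  | monomial n a =>
    rw [OmegaOp, Polynomial.sum_monomial_index _ _ (by simp),
      PowerSeries.evalDerivative_apply_of_natDegree_lt _
        ((natDegree_monomial_le a).trans_lt n.lt_succ_self), genBernoulliPoly, mul_sum]
    refine sum_congr rfl fun j _ => ?_
    rw [← C_mul_X_pow_eq_monomial, iterate_derivative_C_mul, iterate_derivative_X_pow_eq_smul,
      genBernoulliNumber, Nat.descFactorial_eq_factorial_mul_choose, smul_eq_C_mul,
      smul_eq_C_mul]
    simp only [map_mul, map_natCast, Nat.cast_mul]
    ring

theorem OmegaOp_taylor (γ a : ℂ) (P : ℂ[X]) :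
    OmegaOp γ (taylor a P) = taylor a (OmegaOp γ P) := by
  rw [OmegaOp_eq_evalDerivative, OmegaOp_eq_evalDerivative, PowerSeries.evalDerivative_taylor]

theorem OmegaOp_X_add_C_pow (γ a : ℂ) (k : ℕ) :
    OmegaOp γ ((X + C a) ^ k) = (genBernoulliPoly γ k).comp (X + C a) := by
  rw [← taylor_X_pow, OmegaOp_taylor, ← taylor_apply, ← monomial_one_right_eq_X_pow, OmegaOp,
    sum_monomial_index _ _ (by simp), map_one, one_mul]

theorem OmegaOp_sub_one_derivative (α : ℂ) (P : ℂ[X]) :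
    OmegaOp (α - 1) (derivative P) = OmegaOp α (taylor 1 P) - OmegaOp α P := by
  simp only [OmegaOp_eq_evalDerivative]
  rw [← PowerSeries.evalDerivative_X, ← Module.End.mul_apply, ← PowerSeries.evalDerivative_mul,
    bernoulliBasePow_sub_one_mul_X, mul_sub, mul_one, PowerSeries.evalDerivative_sub,
    PowerSeries.evalDerivative_mul, PowerSeries.evalDerivative_exp, LinearMap.sub_apply,
    Module.End.mul_apply]

theorem OmegaOp_iterate_derivative_X_add_C_pow_mul_X_add_C_pow (γ d e : ℂ) (a b r : ℕ) :
    OmegaOp γ ((r.factorial : ℂ)⁻¹ • derivative^[r] ((X + C d) ^ (a + r) * (X + C e) ^ (b + r))) =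
      ∑ k ∈ range (b + r + 1),
        C ((e - d) ^ (b + r - k) * ((b + r).choose k : ℂ) * ((a + k + r).choose r : ℂ)) *
          (genBernoulliPoly γ (a + k)).comp (X + C d) := by
  rw [iterate_derivative_X_add_C_pow_mul_X_add_C_pow, ← Nat.cast_smul_eq_nsmul ℂ, smul_smul,
    inv_mul_cancel₀ (Nat.cast_ne_zero.2 r.factorial_ne_zero), one_smul,
    OmegaOp_eq_evalDerivative, map_sum]
  refine sum_congr rfl fun k _ => ?_
  rw [← smul_eq_C_mul, map_smul, ← OmegaOp_eq_evalDerivative, OmegaOp_X_add_C_pow, smul_eq_C_mul]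

/-- Corollary (generalization of identities of Nielsen and Agoh): for `α, β ∈ ℂ` and
`ℓ, n, m, r ∈ ℕ`, in `ℂ[X]`:
`∑_{k=0}^{n+r} (m-2β)^{n+r-k} C(n+r,k) C(ℓ+k+r,r) B_{ℓ+k}^{(α)}(X+β)`
`- ∑_{k=0}^{ℓ+r} (-1)^{r+ℓ+k} (m-2β)^{ℓ+r-k} C(ℓ+r,k) C(n+k+r,r) B_{n+k}^{(α)}(X-β+m-1)`
`= Ω_{α-1} ( (1/r!) D^{r+1} ( (X+β-1)^{ℓ+r} (X-β+m-1)^{n+r} ) )`. -/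
theorem nielsen_agoh_generalization (α β : ℂ) (ℓ n m r : ℕ) :
    (∑ k ∈ Finset.range (n + r + 1),
        Polynomial.C (((m : ℂ) - 2 * β) ^ (n + r - k) * ((n + r).choose k : ℂ) *
            ((ℓ + k + r).choose r : ℂ)) *
          (genBernoulliPoly α (ℓ + k)).comp (Polynomial.X + Polynomial.C β)) -
      ∑ k ∈ Finset.range (ℓ + r + 1),
        Polynomial.C ((-1 : ℂ) ^ (r + ℓ + k) * ((m : ℂ) - 2 * β) ^ (ℓ + r - k) *
            ((ℓ + r).choose k : ℂ) * ((n + k + r).choose r : ℂ)) *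
          (genBernoulliPoly α (n + k)).comp
            (Polynomial.X + Polynomial.C (-β + (m : ℂ) - 1)) =
    OmegaOp (α - 1)
      ((r.factorial : ℂ)⁻¹ •
        Polynomial.derivative^[r + 1]
          ((Polynomial.X + Polynomial.C (β - 1)) ^ (ℓ + r) *
            (Polynomial.X + Polynomial.C (-β + (m : ℂ) - 1)) ^ (n + r))) := by
  have hshift : taylor 1 ((X + C (β - 1)) ^ (ℓ + r) * (X + C (-β + m - 1)) ^ (n + r)) =
      (X + C β) ^ (ℓ + r) * (X + C (-β + m)) ^ (n + r) := by
    rw [taylor_mul, taylor_pow, taylor_pow, map_add, map_add, taylor_X, taylor_C, taylor_C,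
      add_assoc, add_assoc, ← C_add, ← C_add, add_sub_cancel, add_sub_cancel]
  rw [Function.iterate_succ_apply', ← derivative_smul, OmegaOp_sub_one_derivative, map_smul,
    ← iterate_derivative_taylor, hshift, OmegaOp_iterate_derivative_X_add_C_pow_mul_X_add_C_pow,
    mul_comm ((X + C (β - 1)) ^ (ℓ + r)), OmegaOp_iterate_derivative_X_add_C_pow_mul_X_add_C_pow]
  congr 1
  · refine sum_congr rfl fun k _ => ?_
    rw [show -β + (m : ℂ) - β = m - 2 * β by ring]
  · refine sum_congr rfl fun k hk => ?_
    have hkl : k ≤ ℓ + r := Nat.lt_succ_iff.1 (mem_range.1 hk)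
    rw [show β - 1 - (-β + m - 1) = -1 * (m - 2 * β) by ring, mul_pow,
      show r + ℓ + k = (ℓ + r - k) + 2 * k by omega, pow_add, pow_mul, neg_one_sq, one_pow, mul_one]
end

section
/- Let x, y, z ∈ ℂ with x + y + z = s + 1 where s is a natural number, and let ℓ, n, r be natural numbers. Then Σ_{k=0}^{n+r} x^{n+r−k} C(n+r,k) C(ℓ+k+r,r) B_{ℓ+k}(y) + (−1)^{ℓ+n+r+1} Σ_{k=0}^{ℓ+r} x^{ℓ+r−k} C(ℓ+r,k) C(n+k+r,r) B_{n+k}(z) = (r+1) Σ_{k=1}^{s} Σ_{j=0}^{r+1} C(n+r,j) C(ℓ+r,r+1−j) (y−k)^{ℓ+j−1} (x+y−k)^{n+r−j}, with the convention that a term whose binomial coefficient C(ℓ+r,r+1−j) vanishes is zero (this covers the only case ℓ = j = 0 where the exponent ℓ+j−1 would be negative). -/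
/-!
Put `Q = X^(n+r) (X - x)^(ℓ+r)` and let `P = Q^(r) / r!` be its `r`-th Hasse derivative. For a
polynomial write `𝔅_w(∑ pₘ Xᵐ) = ∑ pₘ Bₘ(w)`; the Appell property of the `Bₘ` makes
`𝔅_y(P(X + x)) = 𝔅_{x+y}(P)`. Expanding `P(X + x) = (X^(ℓ+r) (X + x)^(n+r))^(r) / r!` and `P`
identifies the first sum with `𝔅_{x+y}(P)` and, after the reflection `Bₘ(1 - w) = (-1)ᵐ Bₘ(w)` at
`z = 1 - (x + y - s)`, the signed second sum with `-𝔅_{x+y-s}(P)`. Since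
`Bₘ(w + 1) - Bₘ(w) = m w^(m-1)`, the difference telescopes to `∑_{k=1}^s P'(x + y - k)`, and
`P' = (r + 1) Q^(r+1) / (r+1)!` is expanded by the Leibniz rule.
-/

open scoped BigOperators
open Finset

noncomputable section

/-- The classical Bernoulli polynomial `B_n(x)` (with `B_1(0) = -1/2`),
evaluated at a complex number `x`. -/
def bernPoly (n : ℕ) (x : ℂ) : ℂ := Polynomial.aeval x (Polynomial.bernoulli n)

end

open Polynomial

namespace Polynomial

variable {R : Type*} [CommSemiring R]

theorem hasseDeriv_taylor (k : ℕ) (c : R) (f : R[X]) :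
    hasseDeriv k (taylor c f) = taylor c (hasseDeriv k f) := by
  ext i
  rw [hasseDeriv_coeff, taylor_coeff, taylor_coeff, ← LinearMap.comp_apply (hasseDeriv i),
    hasseDeriv_comp, LinearMap.smul_apply, eval_smul, nsmul_eq_mul, Nat.choose_symm_add]

theorem hasseDeriv_X_pow (k m : ℕ) :
    hasseDeriv k (X ^ m : R[X]) = (m.choose k : R) • X ^ (m - k) := by
  rw [← monomial_one_right_eq_X_pow, hasseDeriv_monomial, mul_one, ← C_mul_X_pow_eq_monomial,
    C_mul']

theorem derivative_hasseDeriv (k : ℕ) (f : R[X]) :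
    derivative (hasseDeriv k f) = (k + 1) • hasseDeriv (k + 1) f := by
  rw [← hasseDeriv_one, ← LinearMap.comp_apply, hasseDeriv_comp, Nat.choose_one_right,
    add_comm 1 k, LinearMap.smul_apply]

theorem hasseDeriv_X_pow_mul_X_add_C_pow (a b r : ℕ) (c : R) :
    hasseDeriv r (X ^ (a + r) * (X + C c) ^ (b + r)) =
      ∑ k ∈ range (b + r + 1),
        C (c ^ (b + r - k) * (b + r).choose k * (a + k + r).choose r) * X ^ (a + k) := by
  rw [add_pow, mul_sum, map_sum]
  refine sum_congr rfl fun k _ => ?_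
  have hterm : X ^ (a + r) * (X ^ k * C c ^ (b + r - k) * ((b + r).choose k : R[X])) =
      C (c ^ (b + r - k) * (b + r).choose k) * X ^ (a + k + r) := by
    rw [C_mul, C_pow, ← map_natCast C]
    ring
  rw [hterm, C_mul', map_smul, hasseDeriv_X_pow, Nat.add_sub_cancel, smul_smul, ← C_mul']

theorem eval_hasseDeriv_succ_X_pow_mul_X_add_C_pow (a b r : ℕ) (c u : R) :
    (hasseDeriv (r + 1) (X ^ (b + r) * (X + C c) ^ (a + r))).eval u =
      ∑ j ∈ range (r + 2), ((b + r).choose j : R) * (a + r).choose (r + 1 - j) *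
        (u + c) ^ (a + j - 1) * u ^ (b + r - j) := by
  rw [hasseDeriv_mul, Finset.Nat.sum_antidiagonal_eq_sum_range_succ_mk, eval_finsetSum]
  refine sum_congr rfl fun j hj => ?_
  have hjr := mem_range_succ_iff.mp hj
  rw [← taylor_X_pow, hasseDeriv_taylor, hasseDeriv_X_pow, hasseDeriv_X_pow, map_smul,
    taylor_X_pow]
  by_cases hle : r + 1 - j ≤ a + r
  · rw [show a + r - (r + 1 - j) = a + j - 1 by omega]
    simp only [eval_mul, eval_smul, eval_pow, eval_add, eval_X, eval_C]
    ring
  -- the only case where `a + j - 1` truncates (`a = j = 0`) lands here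
  · simp [Nat.choose_eq_zero_of_lt (not_le.mp hle)]

end Polynomial

theorem bernPoly_eq_sum (m : ℕ) (w : ℂ) :
    bernPoly m w = ∑ i ∈ range (m + 1), (bernoulli i : ℂ) * m.choose i * w ^ (m - i) := by
  simp [bernPoly, Polynomial.bernoulli, aeval_monomial]

theorem bernPoly_add_one (m : ℕ) (w : ℂ) :
    bernPoly m (w + 1) = bernPoly m w + m * w ^ (m - 1) := by
  simpa [bernPoly, aeval_comp, add_comm] using
    congr_arg (aeval w) (Polynomial.bernoulli_comp_one_add_X m)

theorem bernPoly_one_sub (m : ℕ) (w : ℂ) : bernPoly m (1 - w) = (-1) ^ m * bernPoly m w := by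
  simpa [bernPoly, aeval_comp] using congr_arg (aeval w) (Polynomial.bernoulli_comp_one_sub_X m)

theorem sum_pow_mul_bernPoly_one_sub (N b : ℕ) (c : ℕ → ℂ) (x u : ℂ) :
    ∑ k ∈ range (N + 1), x ^ (N - k) * c k * bernPoly (b + k) (1 - u) =
      (-1) ^ (N + b) * ∑ k ∈ range (N + 1), (-x) ^ (N - k) * c k * bernPoly (b + k) u := by
  rw [mul_sum]
  refine sum_congr rfl fun k hk => ?_
  have hkN := mem_range_succ_iff.mp hk
  have hsign : (-1 : ℂ) ^ (N + b) * (-1) ^ (N - k) = (-1) ^ (b + k) := by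
    rw [← pow_add, show N + b + (N - k) = b + k + 2 * (N - k) by omega, pow_add, pow_mul]
    simp
  rw [bernPoly_one_sub, ← hsign, neg_pow x]
  ring

/-- Umbral evaluation `P(w + 𝔅)` with `𝔅ⁱ := Bᵢ`, i.e. `∑ᵢ (hasseDeriv i P)(w) Bᵢ`. Defined through
the Taylor shift so that translation invariance is immediate; on `Xᵐ` it gives `Bₘ(w)`. -/
noncomputable def bernoulliUmbral (w : ℂ) : ℂ[X] →ₗ[ℂ] ℂ :=
  (lsum fun i => (bernoulli i : ℂ) • LinearMap.id).comp (taylor w)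

theorem bernoulliUmbral_X_pow (w : ℂ) (m : ℕ) : bernoulliUmbral w (X ^ m) = bernPoly m w := by
  rw [bernoulliUmbral, LinearMap.comp_apply, taylor_X_pow, lsum_apply,
    sum_over_range' _ (by simp) (m + 1) (by rw [natDegree_pow_X_add_C]; omega), bernPoly_eq_sum]
  refine sum_congr rfl fun i _ => ?_
  simp only [coeff_X_add_C_pow, LinearMap.smul_apply, LinearMap.id_coe, id_eq, smul_eq_mul]
  ring

theorem bernoulliUmbral_C_mul_X_pow (w a : ℂ) (m : ℕ) :
    bernoulliUmbral w (C a * X ^ m) = a * bernPoly m w := by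
  rw [C_mul', map_smul, bernoulliUmbral_X_pow, smul_eq_mul]

theorem bernoulliUmbral_sum {ι : Type*} (w : ℂ) (s : Finset ι) (f : ι → ℂ) (g : ι → ℕ) :
    bernoulliUmbral w (∑ k ∈ s, C (f k) * X ^ g k) = ∑ k ∈ s, f k * bernPoly (g k) w := by
  simp only [map_sum, bernoulliUmbral_C_mul_X_pow]

theorem bernoulliUmbral_taylor (w c : ℂ) (P : ℂ[X]) :
    bernoulliUmbral w (taylor c P) = bernoulliUmbral (w + c) P := by
  rw [bernoulliUmbral, bernoulliUmbral, LinearMap.comp_apply, LinearMap.comp_apply, taylor_taylor]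

theorem bernoulliUmbral_add_one_sub (w : ℂ) (P : ℂ[X]) :
    bernoulliUmbral (w + 1) P - bernoulliUmbral w P = (derivative P).eval w := by
  induction P using Polynomial.induction_on' with
  | add p q hp hq =>
    rw [map_add, map_add, derivative_add, eval_add, ← hp, ← hq]
    ring
  | monomial m a =>
    rw [← C_mul_X_pow_eq_monomial, bernoulliUmbral_C_mul_X_pow, bernoulliUmbral_C_mul_X_pow,
      bernPoly_add_one, derivative_C_mul_X_pow]
    simp only [map_mul, map_natCast, eval_mul, eval_C, eval_natCast, eval_pow, eval_X]
    ring

theorem bernoulliUmbral_sub_sub_natCast (w : ℂ) (P : ℂ[X]) (s : ℕ) :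
    bernoulliUmbral w P - bernoulliUmbral (w - s) P =
      ∑ i ∈ Icc 1 s, (derivative P).eval (w - i) := by
  induction s with
  | zero => simp
  | succ s ih =>
    rw [sum_Icc_succ_top (by omega), ← ih, ← bernoulliUmbral_add_one_sub]
    push_cast
    ring_nf

/-- If `x + y + z = s + 1` with `s ∈ ℕ`, then `S_{n,ℓ,r}^{(1)}(x,y,z) = (r+1)
∑_{k=1}^{s} ∑_{j=0}^{r+1} C(n+r,j) C(ℓ+r,r+1-j) (y-k)^{ℓ+j-1} (x+y-k)^{n+r-j}`.
Terms whose binomial coefficient `C(ℓ+r,r+1-j)` vanishes are zero; this covers the only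
case `ℓ = j = 0` where the exponent `ℓ+j-1` would be negative (here truncated natural
subtraction is used, which is harmless since the corresponding term vanishes). -/
theorem S_explicit_formula (x y z : ℂ) (s : ℕ) (h : x + y + z = (s : ℂ) + 1) (ℓ n r : ℕ) :
    (∑ k ∈ Finset.range (n + r + 1),
        x ^ (n + r - k) * ((n + r).choose k : ℂ) * ((ℓ + k + r).choose r : ℂ) *
          bernPoly (ℓ + k) y) +
      (-1 : ℂ) ^ (ℓ + n + r + 1) *
        ∑ k ∈ Finset.range (ℓ + r + 1),
          x ^ (ℓ + r - k) * ((ℓ + r).choose k : ℂ) * ((n + k + r).choose r : ℂ) *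
            bernPoly (n + k) z =
    ((r : ℂ) + 1) *
      ∑ k ∈ Finset.Icc 1 s, ∑ j ∈ Finset.range (r + 2),
        ((n + r).choose j : ℂ) * ((ℓ + r).choose (r + 1 - j) : ℂ) *
          (y - (k : ℂ)) ^ (ℓ + j - 1) * (x + y - (k : ℂ)) ^ (n + r - j) := by
  set Q : ℂ[X] := X ^ (n + r) * (X + C (-x)) ^ (ℓ + r)
  have hQ : taylor x Q = X ^ (ℓ + r) * (X + C x) ^ (n + r) := by
    simp only [Q, taylor_mul, taylor_pow, map_add, taylor_X, taylor_C, add_assoc, ← C_add,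
      add_neg_cancel, C_0, add_zero, mul_comm]
  have hfirst : ∑ k ∈ range (n + r + 1),
      x ^ (n + r - k) * ((n + r).choose k : ℂ) * ((ℓ + k + r).choose r : ℂ) *
        bernPoly (ℓ + k) y = bernoulliUmbral (x + y) (hasseDeriv r Q) := by
    rw [← bernoulliUmbral_sum, ← hasseDeriv_X_pow_mul_X_add_C_pow, ← hQ, hasseDeriv_taylor,
      bernoulliUmbral_taylor, add_comm]
  have hsecond : (-1 : ℂ) ^ (ℓ + n + r + 1) * ∑ k ∈ range (ℓ + r + 1),
      x ^ (ℓ + r - k) * ((ℓ + r).choose k : ℂ) * ((n + k + r).choose r : ℂ) * bernPoly (n + k) z =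
        -bernoulliUmbral (x + y - s) (hasseDeriv r Q) := by
    have hz : z = 1 - (x + y - s) := by linear_combination h
    have hodd : (-1 : ℂ) ^ (ℓ + n + r + 1) * (-1) ^ (ℓ + r + n) = -1 := by
      rw [← pow_add]
      exact Odd.neg_one_pow ⟨ℓ + n + r, by ring⟩
    have hreflect := sum_pow_mul_bernPoly_one_sub (ℓ + r) n
      (fun k => ((ℓ + r).choose k : ℂ) * (n + k + r).choose r) x (x + y - s)
    simp only [← mul_assoc] at hreflect
    rw [hz, hreflect, ← mul_assoc, hodd, hasseDeriv_X_pow_mul_X_add_C_pow, bernoulliUmbral_sum]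
    simp only [mul_assoc, neg_one_mul]
  rw [hfirst, hsecond, ← sub_eq_add_neg, bernoulliUmbral_sub_sub_natCast, mul_sum]
  refine sum_congr rfl fun k _ => ?_
  rw [derivative_hasseDeriv, eval_smul, eval_hasseDeriv_succ_X_pow_mul_X_add_C_pow, nsmul_eq_mul,
    Nat.cast_succ, show x + y - (k : ℂ) + -x = y - k by ring]
end
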